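/- arXiv:2411.03632 — 8 statements merged into one kernel-verified Lean document; each statement's English description precedes it below -/
import Mathlib

section
/- If F ⊆ P([n]) is a family of subsets and for each i ∈ [n], S_i ⊆ P(ω_i) is a family whose weight enumerator is bounded above by a polynomial p(x) with nonnegative coefficients on an interval I ⊆ ℝ≥0, then the weight enumerator of the composed family F • {S_i} is bounded above by W_F(p(x)) for all x ∈ I. -/
open Finset Polynomial

/-- Weight enumerator of a family of subsets, evaluated at a real `x`:
`W_F(x) = ∑_{f ∈ F} x^{|f|}`. -/
noncomputable def wEval {α : Type*} (F : Finset (Finset α)) (x : ℝ) : ℝ :=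
  ∑ f ∈ F, x ^ f.card

/-- The composed family `F • {S_i}` on the disjoint union `⊔_i ω_i`: for each `f ∈ F`,
take all sets of the form `⊔_{i ∈ f} g_i` where `g_i ∈ S_i` for `i ∈ f`. -/
noncomputable def compFamily {n : ℕ} {ω : Fin n → Type*} [∀ i, DecidableEq (ω i)]
    (F : Finset (Finset (Fin n))) (S : ∀ i, Finset (Finset (ω i))) :
    Finset (Finset ((i : Fin n) × ω i)) :=
  F.biUnion fun f =>
    (f.pi fun i => S i).image fun g =>
      f.attach.biUnion fun i =>
        (g i.1 i.2).map ⟨Sigma.mk i.1, sigma_mk_injective⟩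

/-!
For `x ≥ 0`, `W_{F • {S_i}}(x) ≤ ∑_{f ∈ F} ∏_{i ∈ f} W_{S_i}(x)`: all terms are nonnegative,
so coincidences among the glued sets can only lower the left side. The gluing of one set from
each `S_i` has cardinality the sum of the pieces, so its weight is the product of the weights,
and the sum over choices factors by distributivity. Bounding each factor by `p(x)` gives
`∑_{f ∈ F} p(x)^{|f|} = W_F(p(x))`.
-/

lemma wEval_nonneg {α : Type*} (F : Finset (Finset α)) {x : ℝ} (hx : 0 ≤ x) :
    0 ≤ wEval F x :=
  sum_nonneg fun _ _ => pow_nonneg hx _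

lemma Finset.sum_biUnion_le_sum_sum {α β : Type*} [DecidableEq β] {s : Finset α}
    {t : α → Finset β} {f : β → ℝ} (hf : ∀ b ∈ s.biUnion t, 0 ≤ f b) :
    ∑ b ∈ s.biUnion t, f b ≤ ∑ a ∈ s, ∑ b ∈ t a, f b := by
  have hsnd : s.biUnion t = (s.sigma t).image Sigma.snd := by
    ext b
    simp
  rw [hsnd, ← sum_sigma s t (fun x => f x.2)]
  exact sum_image_le_of_nonneg (hsnd ▸ hf)

lemma card_attach_biUnion_map_sigmaMk {ι : Type*} [DecidableEq ι] {ω : ι → Type*}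
    [∀ i, DecidableEq (ω i)] (f : Finset ι) (g : ∀ i ∈ f, Finset (ω i)) :
    (f.attach.biUnion fun i => (g i.1 i.2).map ⟨Sigma.mk i.1, sigma_mk_injective⟩).card =
      ∑ i ∈ f.attach, (g i.1 i.2).card := by
  rw [card_biUnion]
  · simp only [card_map]
  · intro i _ j _ hij
    simp only [Function.onFun, disjoint_left, mem_map, Function.Embedding.coeFn_mk]
    rintro _ ⟨a, _, rfl⟩ ⟨b, _, hb⟩
    exact hij (Subtype.ext (congrArg Sigma.fst hb).symm)

section Composition

variable {n : ℕ} {ω : Fin n → Type*} [∀ i, DecidableEq (ω i)]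

lemma wEval_image_pi_le (f : Finset (Fin n)) (S : ∀ i, Finset (Finset (ω i))) {x : ℝ}
    (hx : 0 ≤ x) :
    wEval ((f.pi fun i => S i).image fun g =>
        f.attach.biUnion fun i => (g i.1 i.2).map ⟨Sigma.mk i.1, sigma_mk_injective⟩) x ≤
      ∏ i ∈ f, wEval (S i) x := by
  unfold wEval
  calc _ ≤ ∑ g ∈ f.pi fun i => S i, ∏ i ∈ f.attach, x ^ (g i.1 i.2).card := by
        refine (sum_image_le_of_nonneg fun _ _ => pow_nonneg hx _).trans_eq ?_
        simp only [card_attach_biUnion_map_sigmaMk, prod_pow_eq_pow_sum]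
    _ = ∏ i ∈ f, ∑ s ∈ S i, x ^ s.card := (prod_sum f S fun _ s => x ^ s.card).symm

lemma wEval_compFamily_le (F : Finset (Finset (Fin n))) (S : ∀ i, Finset (Finset (ω i)))
    {x : ℝ} (hx : 0 ≤ x) :
    wEval (compFamily F S) x ≤ ∑ f ∈ F, ∏ i ∈ f, wEval (S i) x :=
  (sum_biUnion_le_sum_sum fun _ _ => pow_nonneg hx _).trans
    (sum_le_sum fun f _ => wEval_image_pi_le f S hx)

end Composition

theorem stmt1_general {n : ℕ} {ω : Fin n → Type*} [∀ i, DecidableEq (ω i)]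
    (F : Finset (Finset (Fin n))) (S : ∀ i, Finset (Finset (ω i)))
    (p : Polynomial ℝ)
    (I : Set ℝ) (hI : I ⊆ Set.Ici (0 : ℝ))
    (hS : ∀ i, ∀ x ∈ I, wEval (S i) x ≤ p.eval x) :
    ∀ x ∈ I, wEval (compFamily F S) x ≤ wEval F (p.eval x) := by
  intro x hx
  have hx0 : 0 ≤ x := hI hx
  calc wEval (compFamily F S) x ≤ ∑ f ∈ F, ∏ i ∈ f, wEval (S i) x := wEval_compFamily_le F S hx0
    _ ≤ ∑ f ∈ F, p.eval x ^ f.card := sum_le_sum fun f _ =>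
        (prod_le_prod (fun i _ => wEval_nonneg (S i) hx0) fun i _ => hS i x hx).trans_eq
          (prod_const _)

/-- Composition of weight enumerators: if each `W_{S_i}` is bounded above by a polynomial
`p` with nonnegative coefficients on an interval `I ⊆ ℝ≥0`, then the weight enumerator of
the composed family `F • {S_i}` is bounded above by `W_F(p(x))` on `I`. -/
theorem stmt1 {n : ℕ} {ω : Fin n → Type*} [∀ i, DecidableEq (ω i)]
    (F : Finset (Finset (Fin n))) (S : ∀ i, Finset (Finset (ω i)))
    (p : Polynomial ℝ) (hp : ∀ k, 0 ≤ p.coeff k)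
    (I : Set ℝ) (hI : I ⊆ Set.Ici (0 : ℝ))
    (hS : ∀ i, ∀ x ∈ I, wEval (S i) x ≤ p.eval x) :
    ∀ x ∈ I, wEval (compFamily F S) x ≤ wEval F (p.eval x) :=
  stmt1_general F S p I hI hS
end

section
/- Let q be a prime power, k ≤ q, A ⊆ F_q a set of size k, B ⊆ A, and M = F_q \ B with |B| = s. For a, b, c ∈ A, the sum over x ∈ M of ℓ_a(x)·ℓ_b(x)·ℓ_c(x), where ℓ_i are the Lagrange interpolation polynomials for A, equals -1 if a = b = c ∈ B, and 0 otherwise, provided 3(k-1) < q - 1. -/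
open Finset Polynomial

/-! The product `ℓ_a ℓ_b ℓ_c` has degree at most `3(k-1) < q-1`, so its values sum to zero over
all of `F_q`, because `∑ x, x ^ i = 0` for `i < q - 1`. Hence the sum over `M = F_q \ B` is minus
the sum over `B`, and on the nodes each `ℓ_i` is the indicator of its own node. -/

theorem FiniteField.sum_eval_eq_zero {K : Type*} [Field K] [Fintype K] {p : K[X]}
    (hp : p.natDegree < Fintype.card K - 1) : ∑ x, p.eval x = 0 := by
  simp_rw [eval_eq_sum_range]
  rw [Finset.sum_comm]
  refine sum_eq_zero fun i hi => ?_
  rw [← mul_sum, sum_pow_lt_card_sub_one K i (by grind), mul_zero]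

namespace Lagrange

variable {F ι : Type*} [Field F] [DecidableEq ι] {s : Finset ι} {v : ι → F} {i j k : ι}

theorem eval_basis_node (hvs : Set.InjOn v s) (hj : j ∈ s) :
    (Lagrange.basis s v i).eval (v j) = if i = j then 1 else 0 := by
  split_ifs with hij
  · subst hij
    exact eval_basis_self hvs hj
  · exact eval_basis_of_ne hij hj

theorem natDegree_basis_mul_basis_mul_basis_le (hvs : Set.InjOn v s)
    (hi : i ∈ s) (hj : j ∈ s) (hk : k ∈ s) :
    (Lagrange.basis s v i * Lagrange.basis s v j * Lagrange.basis s v k).natDegree ≤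
      3 * (s.card - 1) :=
  calc _ ≤ (Lagrange.basis s v i).natDegree + (Lagrange.basis s v j).natDegree +
        (Lagrange.basis s v k).natDegree :=
      natDegree_mul_le.trans (Nat.add_le_add_right natDegree_mul_le _)
    _ = 3 * (s.card - 1) := by
      rw [natDegree_basis hvs hi, natDegree_basis hvs hj, natDegree_basis hvs hk]
      ring

theorem sum_eval_basis_mul_basis_mul_basis_nodes (hvs : Set.InjOn v s) {t : Finset ι}
    (hts : t ⊆ s) :
    ∑ x ∈ t, (Lagrange.basis s v i * Lagrange.basis s v j * Lagrange.basis s v k).eval (v x) =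
      if i = j ∧ j = k ∧ i ∈ t then 1 else 0 := by
  have hnode : ∀ x ∈ t, (Lagrange.basis s v i * Lagrange.basis s v j *
      Lagrange.basis s v k).eval (v x) = if (i = x ∧ j = x) ∧ k = x then 1 else 0 := fun x hx => by
    simp only [eval_mul, eval_basis_node hvs (hts hx), ite_zero_mul_ite_zero, mul_one]
  rw [sum_congr rfl hnode]
  by_cases hijk : i = j ∧ j = k
  · obtain ⟨rfl, rfl⟩ := hijk
    simp
  · rw [if_neg (by tauto)]
    exact sum_eq_zero fun x _ => if_neg (by grind)

end Lagrange

/-- Let `A ⊆ F_q` be the node set (of size `k`), `B ⊆ A`, and `M = F_q \ B`. For nodes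
`a, b, c ∈ A`, the sum over `x ∈ M` of the product of the three Lagrange interpolation
polynomials `ℓ_a(x)·ℓ_b(x)·ℓ_c(x)` equals `-1` if `a = b = c ∈ B` and `0` otherwise,
provided `3(k-1) < q - 1`. -/
theorem stmt5 {F : Type*} [Field F] [Fintype F] [DecidableEq F]
    (A B : Finset F) (hBA : B ⊆ A)
    (hdeg : 3 * (A.card - 1) < Fintype.card F - 1)
    (a b c : F) (ha : a ∈ A) (hb : b ∈ A) (hc : c ∈ A) :
    ∑ x ∈ Finset.univ \ B,
        (Lagrange.basis A id a).eval x * (Lagrange.basis A id b).eval x *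
          (Lagrange.basis A id c).eval x =
      if a = b ∧ b = c ∧ a ∈ B then -1 else 0 := by
  have hinj : Set.InjOn (id : F → F) A := Set.injOn_id _
  set p := Lagrange.basis A id a * Lagrange.basis A id b * Lagrange.basis A id c
  have hp : p.natDegree < Fintype.card F - 1 :=
    (Lagrange.natDegree_basis_mul_basis_mul_basis_le hinj ha hb hc).trans_lt hdeg
  have hB : ∑ x ∈ B, p.eval x = _ := Lagrange.sum_eval_basis_mul_basis_mul_basis_nodes hinj hBA
  simp only [← eval_mul]
  rw [sum_sdiff_eq_sub (subset_univ B), FiniteField.sum_eval_eq_zero hp, hB, zero_sub]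
  split_ifs <;> simp
end

section
/- Let q be a prime power, and let C1 be the evaluations of polynomials of degree < k on an evaluation set M = F_q \ B with B ⊆ A, |A| = k. With systematic encoding on positions A, for any three codewords c1, c2, c3 of C1 corresponding to messages m1, m2, m3 ∈ F_q^A, the coordinate-wise triple product summed over M satisfies Σ_{i ∈ M} (c1)_i (c2)_i (c3)_i = -Σ_{i ∈ B} (m1)_i (m2)_i (m3)_i, provided 3(k-1) < q-1. -/
open Finset Polynomial

lemma sum_eval_zero {F : Type*} [Field F] [Fintype F] [DecidableEq F]
    (p : F[X]) (h : p.natDegree < Fintype.card F - 1) :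
    ∑ x : F, p.eval x = 0 := by
  have : ∀ x : F, p.eval x = ∑ j ∈ Finset.range (p.natDegree + 1), p.coeff j * x ^ j := by
    intro x; rw [Polynomial.eval_eq_sum_range]
  simp_rw [this]
  rw [Finset.sum_comm]
  apply Finset.sum_eq_zero
  intro j hj
  rw [← Finset.mul_sum, FiniteField.sum_pow_lt_card_sub_one, mul_zero]
  have := Finset.mem_range.mp hj
  omega

/-- Triple products of codewords of the punctured Reed–Solomon code `C1`: with
systematic encoding on positions `A ⊆ F_q`, puncture set `B ⊆ A`, evaluation set
`M = F_q \ B`, and `3(|A|-1) < q-1`, for any three messages `m1, m2, m3` the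
coordinate-wise triple product of the corresponding codewords (evaluations of the
Lagrange interpolation polynomials) summed over `M` equals
`-∑_{i ∈ B} m1_i m2_i m3_i`. -/
theorem stmt6 {F : Type*} [Field F] [Fintype F] [DecidableEq F]
    (A B : Finset F) (hBA : B ⊆ A)
    (hdeg : 3 * (A.card - 1) < Fintype.card F - 1)
    (m1 m2 m3 : F → F) :
    ∑ x ∈ Finset.univ \ B,
        (Lagrange.interpolate A id m1).eval x * (Lagrange.interpolate A id m2).eval x *
          (Lagrange.interpolate A id m3).eval x =
      -∑ i ∈ B, m1 i * m2 i * m3 i := by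
  set p1 := Lagrange.interpolate A id m1
  set p2 := Lagrange.interpolate A id m2
  set p3 := Lagrange.interpolate A id m3
  have hsplit : (∑ x ∈ Finset.univ \ B, p1.eval x * p2.eval x * p3.eval x)
      + ∑ x ∈ B, p1.eval x * p2.eval x * p3.eval x
      = ∑ x : F, p1.eval x * p2.eval x * p3.eval x :=
    Finset.sum_sdiff (Finset.subset_univ B)
  have hinj : Set.InjOn (id : F → F) A := Function.injective_id.injOn
  have hd : ∀ m : F → F, (Lagrange.interpolate A id m).natDegree ≤ A.card - 1 := by
    intro m
    rcases eq_or_ne (Lagrange.interpolate A id m) 0 with h0 | h0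
    · simp [h0]
    · have hlt := Lagrange.degree_interpolate_lt (v := id) m hinj
      have hA : A.Nonempty := by
        by_contra h
        rw [Finset.not_nonempty_iff_eq_empty] at h
        subst h
        simp [Lagrange.interpolate] at h0
      have hc : 1 ≤ A.card := Finset.card_pos.mpr hA
      have hlt2 : (Lagrange.interpolate A id m).degree < ((A.card - 1 + 1 : ℕ) : WithBot ℕ) := by
        convert hlt using 2
        omega
      have := (Polynomial.natDegree_lt_iff_degree_lt h0).mpr hlt2
      omega
  have hzero : ∑ x : F, p1.eval x * p2.eval x * p3.eval x = 0 := by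
    have : ∀ x : F, p1.eval x * p2.eval x * p3.eval x = (p1 * p2 * p3).eval x := by
      simp
    simp_rw [this]
    apply sum_eval_zero
    have := (Polynomial.natDegree_mul_le (p := p1 * p2) (q := p3)).trans
      (Nat.add_le_add (Polynomial.natDegree_mul_le) le_rfl)
    have h1 : p1.natDegree ≤ A.card - 1 := hd m1
    have h2 : p2.natDegree ≤ A.card - 1 := hd m2
    have h3 : p3.natDegree ≤ A.card - 1 := hd m3
    omega
  have hB : ∀ i ∈ B, p1.eval i * p2.eval i * p3.eval i = m1 i * m2 i * m3 i := by
    intro i hi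
    rw [show p1.eval i = m1 i from Lagrange.eval_interpolate_at_node m1 hinj (hBA hi),
      show p2.eval i = m2 i from Lagrange.eval_interpolate_at_node m2 hinj (hBA hi),
      show p3.eval i = m3 i from Lagrange.eval_interpolate_at_node m3 hinj (hBA hi)]
  rw [Finset.sum_congr rfl hB, hzero] at hsplit
  exact eq_neg_of_add_eq_zero_left hsplit
end

section
/- Let q be a prime power and fix parameters k, m, s with q/3 ≥ k ≥ m ≥ s > 0 and 2k ≤ q - m, a set B ⊆ F_q of size s, and M = F_q \ B. Let C2⊥ be the evaluations on M of polynomials of degree < m vanishing on B. Then the dual code C2 = (C2⊥)⊥ (with respect to the standard inner product on F_q^M) equals the evaluations on M of all polynomials of degree < q - m. -/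
/-!
A polynomial of degree `< m` vanishing on `B` is `R * Q` with `R = ∏_{b ∈ B} (X - b)` and
`deg Q < m - s`; since `R` has no zero on `M` and `|M| = q - s`, the evaluation code of these
polynomials on `M` has dimension `m - s`, and that of all polynomials of degree `< q - m` has
dimension `q - m`. The two codes are orthogonal: for `f` vanishing on `B`, the sum of `f g` over `M`
is its sum over all of `F_q`, which vanishes because `deg (f g) < q - 1`. As the dimensions add up
to `|M|`, each code is the dual of the other.
-/

open Polynomial Module Matrix Finset

namespace Polynomial

section Semiring

variable {R : Type*} [Semiring R]

theorem mul_mem_degreeLT {a b : ℕ} {f g : R[X]} (hf : f ∈ degreeLT R a)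
    (hg : g ∈ degreeLT R b) : f * g ∈ degreeLT R (a + b - 1) := by
  rcases eq_or_ne f 0 with rfl | hf0
  · simp
  rcases eq_or_ne g 0 with rfl | hg0
  · simp
  rw [mem_degreeLT] at hf hg ⊢
  have ha := (natDegree_lt_iff_degree_lt hf0).2 hf
  have hb := (natDegree_lt_iff_degree_lt hg0).2 hg
  calc (f * g).degree ≤ ↑(f.natDegree + g.natDegree) := degree_le_of_natDegree_le natDegree_mul_le
    _ < ↑(a + b - 1) := by exact_mod_cast (by omega : f.natDegree + g.natDegree < a + b - 1)

noncomputable def evalVec {ι : Type*} (v : ι → R) : R[X] →ₗ[R] (ι → R) :=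
  LinearMap.pi fun i => leval (v i)

@[simp]
theorem evalVec_apply {ι : Type*} (v : ι → R) (p : R[X]) (i : ι) :
    evalVec v p i = p.eval (v i) :=
  rfl

noncomputable def degreeLTVanishingOn (B : Finset R) (m : ℕ) : Submodule R R[X] :=
  degreeLT R m ⊓ ⨅ b ∈ B, LinearMap.ker (leval b)

theorem mem_degreeLTVanishingOn {B : Finset R} {m : ℕ} {p : R[X]} :
    p ∈ degreeLTVanishingOn B m ↔ p ∈ degreeLT R m ∧ ∀ b ∈ B, p.eval b = 0 := by
  simp only [degreeLTVanishingOn, Submodule.mem_inf, Submodule.mem_iInf, LinearMap.mem_ker,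
    leval_apply]

end Semiring

section Domain

variable {R : Type*} [CommRing R] [IsDomain R]

theorem eval_prod_X_sub_C_ne_zero {B : Finset R} {x : R} (hx : x ∉ B) :
    (∏ b ∈ B, (X - C b)).eval x ≠ 0 := by
  rw [eval_prod, prod_ne_zero_iff]
  intro b hb
  rw [eval_sub, eval_X, eval_C, sub_ne_zero]
  exact fun hxb => hx (hxb ▸ hb)

theorem degreeLTVanishingOn_eq_map_mulLeft (B : Finset R) (m : ℕ) :
    degreeLTVanishingOn B m =
      (degreeLT R (m - #B)).map (LinearMap.mulLeft R (∏ b ∈ B, (X - C b))) := by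
  set r := ∏ b ∈ B, (X - C b)
  have hr0 : r ≠ 0 := (monic_prod_of_monic _ _ fun b _ => monic_X_sub_C b).ne_zero
  have hr : r.natDegree = #B := by
    rw [natDegree_prod _ _ fun b _ => X_sub_C_ne_zero b]
    simp
  ext p
  simp only [mem_degreeLTVanishingOn, Submodule.mem_map, LinearMap.mulLeft_apply, mem_degreeLT]
  constructor
  · rintro ⟨hpm, hpB⟩
    rcases eq_or_ne p 0 with rfl | hp0
    · exact ⟨0, by simp, mul_zero r⟩
    have hdvd : r ∣ p := (Multiset.prod_X_sub_C_dvd_iff_le_roots hp0 B.val).2 <|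
      (Multiset.le_iff_subset B.nodup).2 fun b hb => (mem_roots hp0).2 (hpB b hb)
    obtain ⟨Q, rfl⟩ := hdvd
    have hQ0 : Q ≠ 0 := right_ne_zero_of_mul hp0
    rw [← natDegree_lt_iff_degree_lt hp0, natDegree_mul hr0 hQ0, hr] at hpm
    exact ⟨Q, (natDegree_lt_iff_degree_lt hQ0).1 (by omega), rfl⟩
  · rintro ⟨Q, hQ, rfl⟩
    refine ⟨?_, fun b hb => by rw [eval_mul, eval_prod, prod_eq_zero hb (by simp), zero_mul]⟩
    rcases eq_or_ne Q 0 with rfl | hQ0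
    · simp
    rw [← natDegree_lt_iff_degree_lt hQ0] at hQ
    rw [← natDegree_lt_iff_degree_lt (mul_ne_zero hr0 hQ0), natDegree_mul hr0 hQ0, hr]
    omega

theorem eq_zero_of_mem_degreeLT_of_evalVec_eq_zero {ι : Type*} [Fintype ι] {v : ι → R}
    (hv : Function.Injective v) {n : ℕ} (hn : n ≤ Fintype.card ι) {p : R[X]}
    (hp : p ∈ degreeLT R n) (h : evalVec v p = 0) : p = 0 :=
  eq_zero_of_degree_lt_of_eval_index_eq_zero univ hv.injOn
    ((mem_degreeLT.1 hp).trans_le (by exact_mod_cast hn)) fun i _ => congrFun h i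

end Domain

section Field

variable {K : Type*} [Field K]

theorem finrank_map_degreeLT {V : Type*} [AddCommGroup V] [Module K V]
    {f : K[X] →ₗ[K] V} {n : ℕ} (hf : ∀ p ∈ degreeLT K n, f p = 0 → p = 0) :
    finrank K ((degreeLT K n).map f) = n := by
  have hinj : Function.Injective (f ∘ₗ (degreeLT K n).subtype) := by
    rw [← LinearMap.ker_eq_bot, LinearMap.ker_eq_bot']
    exact fun p hp => Subtype.ext (hf p p.2 hp)
  rw [← Submodule.range_subtype (degreeLT K n), ← LinearMap.range_comp,
    LinearMap.finrank_range_of_inj hinj, (degreeLTEquiv K n).finrank_eq, finrank_fin_fun]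

theorem finrank_map_evalVec_degreeLT {ι : Type*} [Fintype ι] {v : ι → K}
    (hv : Function.Injective v) {n : ℕ} (hn : n ≤ Fintype.card ι) :
    finrank K ((degreeLT K n).map (evalVec v)) = n :=
  finrank_map_degreeLT fun _ hp => eq_zero_of_mem_degreeLT_of_evalVec_eq_zero hv hn hp

theorem finrank_map_evalVec_degreeLTVanishingOn [Fintype K] [DecidableEq K] {B : Finset K}
    {m : ℕ} (hm : m ≤ Fintype.card K) :
    finrank K ((degreeLTVanishingOn B m).map (evalVec ((↑) : {x // x ∉ B} → K))) = m - #B := by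
  rw [degreeLTVanishingOn_eq_map_mulLeft, ← Submodule.map_comp]
  refine finrank_map_degreeLT fun Q hQ hBQ => ?_
  have hcard : Fintype.card {x // x ∉ B} = Fintype.card K - #B := by
    simp [Fintype.card_subtype_compl]
  refine eq_zero_of_mem_degreeLT_of_evalVec_eq_zero (v := ((↑) : {x // x ∉ B} → K))
    Subtype.val_injective (by omega) hQ ?_
  funext x
  have hx := congrFun hBQ x
  simp only [LinearMap.comp_apply, LinearMap.mulLeft_apply, evalVec_apply, eval_mul] at hx
  exact (mul_eq_zero.1 hx).resolve_left (eval_prod_X_sub_C_ne_zero x.2)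

end Field

end Polynomial

namespace FiniteField

variable {K : Type*} [Field K] [Fintype K]

theorem sum_eval_eq_zero_s7 {f : K[X]} (hf : f ∈ degreeLT K (Fintype.card K - 1)) :
    ∑ x, f.eval x = 0 := by
  simp_rw [eval_eq_sum_degreeLTEquiv hf]
  rw [sum_comm]
  refine sum_eq_zero fun i _ => ?_
  rw [← mul_sum, sum_pow_lt_card_sub_one K i i.2, mul_zero]

variable [DecidableEq K]

theorem sum_compl_eval_mul_eq_zero {B : Finset K} {m n : ℕ} (hmn : m + n ≤ Fintype.card K)
    {f g : K[X]} (hf : f ∈ degreeLTVanishingOn B m) (hg : g ∈ degreeLT K n) :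
    ∑ x : {x // x ∉ B}, f.eval x.1 * g.eval x.1 = 0 := by
  obtain ⟨hfm, hfB⟩ := mem_degreeLTVanishingOn.1 hf
  have hfg : f * g ∈ degreeLT K (Fintype.card K - 1) :=
    degreeLT_mono (by omega) (mul_mem_degreeLT hfm hg)
  calc ∑ x : {x // x ∉ B}, f.eval x.1 * g.eval x.1
      = ∑ x ∈ Bᶜ, (f * g).eval x := by
        simp only [eval_mul]
        exact (sum_subtype Bᶜ (fun x => mem_compl) fun x => f.eval x * g.eval x).symm
    _ = ∑ x, (f * g).eval x := by
        rw [← sum_compl_add_sum B, sum_eq_zero (s := B) fun b hb => by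
          rw [eval_mul, hfB b hb, zero_mul], add_zero]
    _ = 0 := sum_eval_eq_zero_s7 hfg

end FiniteField

namespace Matrix

variable {ι K : Type*} [Fintype ι] [Field K]

theorem dotProductBilin_nondegenerate :
    (dotProductBilin K K : LinearMap.BilinForm K (ι → K)).Nondegenerate :=
  ⟨fun x hx => dotProduct_eq_zero x hx,
    fun y hy => dotProduct_eq_zero y fun x => (dotProduct_comm y x).trans (hy x)⟩

theorem orthogonal_dotProductBilin_eq {W U : Submodule K (ι → K)}
    (hWU : ∀ w ∈ W, ∀ u ∈ U, w ⬝ᵥ u = 0)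
    (hdim : Fintype.card ι ≤ finrank K W + finrank K U) :
    LinearMap.BilinForm.orthogonal (dotProductBilin K K) W = U := by
  have hle : U ≤ LinearMap.BilinForm.orthogonal (dotProductBilin K K) W := fun u hu =>
    LinearMap.BilinForm.mem_orthogonal_iff.2 fun w hw => hWU w hw u hu
  refine (Submodule.eq_of_le_of_finrank_le hle ?_).symm
  rw [LinearMap.BilinForm.finrank_orthogonal dotProductBilin_nondegenerate,
    finrank_fintype_fun_eq_card]
  omega

end Matrix

theorem orthogonal_map_evalVec_degreeLTVanishingOn {K : Type*} [Field K] [Fintype K]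
    [DecidableEq K] {B : Finset K} {m : ℕ} (hBm : #B ≤ m) (hm : m ≤ Fintype.card K) :
    LinearMap.BilinForm.orthogonal (dotProductBilin K K)
        ((degreeLTVanishingOn B m).map (evalVec ((↑) : {x // x ∉ B} → K))) =
      (degreeLT K (Fintype.card K - m)).map (evalVec ((↑) : {x // x ∉ B} → K)) := by
  have hcard : Fintype.card {x // x ∉ B} = Fintype.card K - #B := by
    simp [Fintype.card_subtype_compl]
  refine orthogonal_dotProductBilin_eq ?_ ?_
  · rintro _ ⟨f, hf, rfl⟩ _ ⟨g, hg, rfl⟩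
    exact FiniteField.sum_compl_eval_mul_eq_zero (by omega) hf hg
  · rw [finrank_map_evalVec_degreeLTVanishingOn hm,
      finrank_map_evalVec_degreeLT Subtype.val_injective (by omega)]
    omega

theorem stmt7_general {F : Type*} [Field F] [Fintype F] [DecidableEq F]
    (k m s : ℕ) (hk3 : 3 * k ≤ Fintype.card F) (hmk : m ≤ k) (hsm : s ≤ m)
    (B : Finset F) (hB : B.card = s) :
    {c : {x : F // x ∉ B} → F |
        ∀ d : {x : F // x ∉ B} → F,
          (∃ p ∈ Polynomial.degreeLT F m,
              (∀ b ∈ B, p.eval b = 0) ∧ ∀ x, d x = p.eval x.1) →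
          ∑ x, c x * d x = 0} =
      {c : {x : F // x ∉ B} → F |
        ∃ p ∈ Polynomial.degreeLT F (Fintype.card F - m), ∀ x, c x = p.eval x.1} := by
  ext c
  have hc := SetLike.ext_iff.1
    (orthogonal_map_evalVec_degreeLTVanishingOn (hB ▸ hsm) (by omega : m ≤ Fintype.card F)) c
  simp only [LinearMap.BilinForm.mem_orthogonal_iff, dotProductBilin_apply_apply,
    dotProduct_comm _ c, Submodule.mem_map, @eq_comm _ (evalVec _ _), mem_degreeLTVanishingOn,
    funext_iff, evalVec_apply, and_assoc] at hc
  exact hc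

/-- Computation of the dual code `C2 = (C2⊥)⊥` for the punctured quantum Reed–Solomon
construction: with parameters `q/3 ≥ k ≥ m ≥ s > 0`, `2k ≤ q - m`, `B ⊆ F_q` of size
`s`, and `M = F_q \ B`, the dual (w.r.t. the standard inner product on `F_q^M`) of the
code of evaluations on `M` of polynomials of degree `< m` vanishing on `B` equals the
code of evaluations on `M` of all polynomials of degree `< q - m`. -/
theorem stmt7 {F : Type*} [Field F] [Fintype F] [DecidableEq F]
    (k m s : ℕ) (hk3 : 3 * k ≤ Fintype.card F) (hmk : m ≤ k) (hsm : s ≤ m) (hs : 0 < s)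
    (h2k : 2 * k ≤ Fintype.card F - m)
    (B : Finset F) (hB : B.card = s) :
    {c : {x : F // x ∉ B} → F |
        ∀ d : {x : F // x ∉ B} → F,
          (∃ p ∈ Polynomial.degreeLT F m,
              (∀ b ∈ B, p.eval b = 0) ∧ ∀ x, d x = p.eval x.1) →
          ∑ x, c x * d x = 0} =
      {c : {x : F // x ∉ B} → F |
        ∃ p ∈ Polynomial.degreeLT F (Fintype.card F - m), ∀ x, c x = p.eval x.1} :=
  stmt7_general k m s hk3 hmk hsm B hB
end

section
/- For prime powers q = 2^l with l ≥ 3, the punctured quantum Reed-Solomon construction with k = m = ⌊q/3⌋ and s = q/4 yields a CSS qudit code with parameters [[3q/4, q/4, ⌊q/3⌋ - q/4 + 1]]_q: block length q - s = 3q/4, dimension k - m + s = q/4, and distance at least min(q-k, m) - s + 1. -/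
/-!
Both codes are images of spaces of polynomials under evaluation on `M = F \ B`, which is
injective on polynomials of degree `< |M|`; the polynomials of degree `< m` vanishing on `B` are
the multiples of the nodal polynomial of `B` by polynomials of degree `< m - s`. This gives
`|C1| = q ^ k` and `|C2⊥| = q ^ (m - s)`. A nonzero word of `C1` has at most `k - 1` zeros.
If `c ≠ 0` lies in the dual of `C2⊥` with support of size `w` and `s + w ≤ m`, then the nodal
polynomial of `B` together with all of the support of `c` but one point `x₀` has degree `< m`,
so it lies in `C2⊥`, and it pairs with `c` to `c x₀` times a nonzero value.
-/

open Polynomial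

/-- The punctured Reed–Solomon code `C1`: evaluations on `M = F_q \ B` of polynomials of
degree `< k`. -/
def C1code {F : Type*} [Field F] [Fintype F] [DecidableEq F] (B : Finset F) (k : ℕ) :
    Set ({x : F // x ∉ B} → F) :=
  {c | ∃ p ∈ Polynomial.degreeLT F k, ∀ x, c x = p.eval x.1}

/-- The code `C2⊥`: evaluations on `M = F_q \ B` of polynomials of degree `< m` vanishing
on `B`. -/
def C2perpCode {F : Type*} [Field F] [Fintype F] [DecidableEq F] (B : Finset F) (m : ℕ) :
    Set ({x : F // x ∉ B} → F) :=
  {c | ∃ p ∈ Polynomial.degreeLT F m, (∀ b ∈ B, p.eval b = 0) ∧ ∀ x, c x = p.eval x.1}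

/-- The dual code with respect to the standard bilinear form on `F_q^M`. -/
def dualCode {F : Type*} [Field F] [Fintype F] [DecidableEq F] {B : Finset F}
    (C : Set ({x : F // x ∉ B} → F)) : Set ({x : F // x ∉ B} → F) :=
  {c | ∀ d ∈ C, ∑ x, c x * d x = 0}

open Finset Lagrange

section Nodal

variable {K : Type*} [Field K] {s : Finset K}

theorem nodal_dvd_of_forall_eval_eq_zero {p : K[X]} (h : ∀ b ∈ s, p.eval b = 0) :
    nodal s id ∣ p :=
  Finset.prod_dvd_of_coprime
    (fun _ _ _ _ hab => pairwise_coprime_X_sub_C Function.injective_id hab)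
    fun b hb => dvd_iff_isRoot.mpr (h b hb)

theorem nodal_mul_mem_degreeLT_iff {m : ℕ} (hs : #s ≤ m) {r : K[X]} :
    nodal s id * r ∈ degreeLT K m ↔ r ∈ degreeLT K (m - #s) := by
  rcases eq_or_ne r 0 with rfl | hr
  · simp
  rw [mem_degreeLT, mem_degreeLT, degree_mul, degree_nodal, degree_eq_natDegree hr]
  norm_cast
  omega

end Nodal

theorem card_degreeLT {R : Type*} [Semiring R] [Fintype R] (k : ℕ) :
    Nat.card (degreeLT R k : Set R[X]) = Fintype.card R ^ k := by
  simp [Nat.card_congr (degreeLTEquiv R k).toEquiv]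

def puncturedEval {R : Type*} [Semiring R] (B : Finset R) (p : R[X]) : {x : R // x ∉ B} → R :=
  fun x => p.eval x.1

section Codes

variable {F : Type*} [Field F] [Fintype F] [DecidableEq F] {B : Finset F}

theorem injOn_puncturedEval {d : ℕ} (hd : d ≤ Fintype.card {x : F // x ∉ B}) :
    Set.InjOn (puncturedEval B) (degreeLT F d) := fun p hp q hq hpq =>
  eq_of_degrees_lt_of_eval_index_eq (v := Subtype.val) univ Subtype.val_injective.injOn
    ((mem_degreeLT.mp hp).trans_le (by simpa using hd))
    ((mem_degreeLT.mp hq).trans_le (by simpa using hd)) fun x _ => congrFun hpq x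

theorem C1code_eq_image (k : ℕ) : C1code B k = puncturedEval B '' degreeLT F k := by
  ext c
  simp only [C1code, Set.mem_image, SetLike.mem_coe, funext_iff, puncturedEval, eq_comm]
  rfl

theorem C2perpCode_eq_image {m : ℕ} (hB : #B ≤ m) :
    C2perpCode B m = (puncturedEval B ∘ (nodal B id * ·)) '' degreeLT F (m - #B) := by
  ext c
  constructor
  · rintro ⟨p, hp, hpB, hc⟩
    obtain ⟨r, rfl⟩ := nodal_dvd_of_forall_eval_eq_zero hpB
    exact ⟨r, (nodal_mul_mem_degreeLT_iff hB).mp hp, funext fun x => (hc x).symm⟩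
  · rintro ⟨r, hr, rfl⟩
    exact ⟨nodal B id * r, (nodal_mul_mem_degreeLT_iff hB).mpr hr,
      fun b hb => eval_mul.trans (mul_eq_zero_of_left (eval_nodal_at_node (v := id) hb) _),
      fun _ => rfl⟩

theorem card_C1code {k : ℕ} (hk : k ≤ Fintype.card {x : F // x ∉ B}) :
    Nat.card (C1code B k) = Fintype.card F ^ k := by
  rw [C1code_eq_image, Nat.card_image_of_injOn (injOn_puncturedEval hk), card_degreeLT]

theorem card_C2perpCode {m : ℕ} (hB : #B ≤ m) (hm : m ≤ Fintype.card {x : F // x ∉ B}) :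
    Nat.card (C2perpCode B m) = Fintype.card F ^ (m - #B) := by
  have hmul : Set.InjOn (nodal B id * ·) (degreeLT F (m - #B)) :=
    (mul_right_injective₀ nodal_ne_zero).injOn
  rw [C2perpCode_eq_image hB, Nat.card_image_of_injOn ((injOn_puncturedEval hm).comp hmul
    fun r hr => (nodal_mul_mem_degreeLT_iff hB).mpr hr), card_degreeLT]

theorem C2perpCode_subset_C1code {m k : ℕ} (h : m ≤ k) : C2perpCode B m ⊆ C1code B k :=
  fun _ ⟨p, hp, _, hc⟩ => ⟨p, degreeLT_mono h hp, hc⟩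

theorem zero_mem_C2perpCode (m : ℕ) : 0 ∈ C2perpCode B m :=
  ⟨0, zero_mem _, fun _ _ => eval_zero, fun _ => eval_zero.symm⟩

theorem zero_mem_dualCode (C : Set ({x : F // x ∉ B} → F)) : 0 ∈ dualCode C := by
  simp [dualCode]

theorem card_lt_add_hammingNorm_of_mem_C1code {k : ℕ} {c : {x : F // x ∉ B} → F}
    (hc : c ∈ C1code B k) (hc0 : c ≠ 0) :
    Fintype.card {x : F // x ∉ B} < k + hammingNorm c := by
  rw [C1code_eq_image] at hc
  obtain ⟨p, hp, rfl⟩ := hc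
  have hp0 : p ≠ 0 := by rintro rfl; exact hc0 (funext fun _ => eval_zero)
  have hroots : #{x | puncturedEval B p x = 0} ≤ p.natDegree := by
    rw [← card_map (Function.Embedding.subtype _)]
    refine card_le_degree_of_subset_roots fun z hz => ?_
    obtain ⟨x, hx, rfl⟩ := mem_map.mp hz
    exact (mem_roots hp0).mpr (mem_filter.mp hx).2
  have hdeg : p.natDegree < k := (natDegree_lt_iff_degree_lt hp0).mpr (mem_degreeLT.mp hp)
  have hsplit : #{x | puncturedEval B p x = 0} + hammingNorm (puncturedEval B p) =
      Fintype.card {x : F // x ∉ B} :=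
    card_filter_add_card_filter_not _
  omega

theorem lt_card_add_hammingNorm_of_mem_dualCode {m : ℕ} {c : {x : F // x ∉ B} → F}
    (hc : c ∈ dualCode (C2perpCode B m)) (hc0 : c ≠ 0) : m < #B + hammingNorm c := by
  obtain ⟨x₀, hx₀⟩ := Function.ne_iff.mp hc0
  set S : Finset F := (univ.filter (c · ≠ 0)).map (Function.Embedding.subtype _)
  have hS : #S = hammingNorm c := card_map _
  have hx₀S : x₀.1 ∈ S :=
    mem_map_of_mem (Function.Embedding.subtype _) (mem_filter.mpr ⟨mem_univ _, hx₀⟩)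
  set p := nodal (B ∪ S.erase x₀.1) id
  by_contra! hm
  have hp : p ∈ degreeLT F m := by
    rw [mem_degreeLT, degree_nodal, Nat.cast_lt]
    have := card_union_le B (S.erase x₀.1)
    have := card_erase_of_mem hx₀S
    have := card_pos.mpr ⟨_, hx₀S⟩
    omega
  have hpB : ∀ b ∈ B, p.eval b = 0 := fun _ hb =>
    eval_nodal_at_node (v := id) (mem_union_left _ hb)
  have hsum := hc (puncturedEval B p) ⟨p, hp, hpB, fun _ => rfl⟩
  rw [sum_eq_single x₀ ?_ (by simp)] at hsum
  · refine mul_ne_zero hx₀ (eval_nodal_not_at_node fun y hy hx₀y => ?_) hsum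
    rcases mem_union.mp hy with hyB | hyS
    · exact x₀.2 (hx₀y ▸ hyB)
    · exact (mem_erase.mp hyS).1 hx₀y.symm
  · intro x _ hx
    by_cases hcx : c x = 0
    · rw [hcx, zero_mul]
    · have hxS : x.1 ∈ S.erase x₀.1 := mem_erase.mpr ⟨fun h => hx (Subtype.ext h),
        mem_map_of_mem (Function.Embedding.subtype _) (mem_filter.mpr ⟨mem_univ _, hcx⟩)⟩
      exact mul_eq_zero_of_right _ (eval_nodal_at_node (v := id) (mem_union_right _ hxS))

end Codes

/-- The punctured quantum Reed–Solomon construction with `q = 2^l` (`l ≥ 3`),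
`k = m = ⌊q/3⌋`, `s = q/4` yields a CSS qudit code with parameters
`[[3q/4, q/4, ⌊q/3⌋ - q/4 + 1]]_q`: the CSS condition `C2⊥ ⊆ C1` holds, the block
length `|M| = q - s = 3q/4`, the number of logical qudits is `k - m + s = q/4`
(expressed via `|C1| = |C2⊥| · q^{q/4}`), and both the weight of any element of
`C1 \ C2⊥` and of any element of `C2 \ C1⊥` are at least
`min(q-k, m) - s + 1 = ⌊q/3⌋ - q/4 + 1`. -/
theorem stmt8 {F : Type*} [Field F] [Fintype F] [DecidableEq F]
    (l : ℕ) (hl : 3 ≤ l) (hcard : Fintype.card F = 2 ^ l)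
    (B : Finset F) (hB : B.card = 2 ^ l / 4) :
    C2perpCode B (2 ^ l / 3) ⊆ C1code B (2 ^ l / 3) ∧
    Fintype.card {x : F // x ∉ B} = 3 * 2 ^ l / 4 ∧
    Nat.card (C1code B (2 ^ l / 3)) =
      Nat.card (C2perpCode B (2 ^ l / 3)) * (2 ^ l) ^ (2 ^ l / 4) ∧
    (∀ c ∈ C1code B (2 ^ l / 3), c ∉ C2perpCode B (2 ^ l / 3) →
      2 ^ l / 3 - 2 ^ l / 4 + 1 ≤ hammingNorm c) ∧
    (∀ c ∈ dualCode (C2perpCode B (2 ^ l / 3)), c ∉ dualCode (C1code B (2 ^ l / 3)) →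
      2 ^ l / 3 - 2 ^ l / 4 + 1 ≤ hammingNorm c) := by
  have h4 : 4 ∣ 2 ^ l := pow_dvd_pow 2 (by omega : 2 ≤ l)
  have hM : Fintype.card {x : F // x ∉ B} = 2 ^ l - 2 ^ l / 4 := by simp [hcard, hB]
  refine ⟨C2perpCode_subset_C1code le_rfl, by omega, ?_, fun c hc hc' => ?_, fun c hc hc' => ?_⟩
  · rw [card_C1code (by omega), card_C2perpCode (by omega) (by omega), hcard, hB, ← pow_add]
    congr 1
    omega
  · have := card_lt_add_hammingNorm_of_mem_C1code hc
      (by rintro rfl; exact hc' (zero_mem_C2perpCode _))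
    omega
  · have := lt_card_add_hammingNorm_of_mem_dualCode hc
      (by rintro rfl; exact hc' (zero_mem_dualCode _))
    omega
end

section
/- Let f, g : ℕ → ℝ and define the recursion W_0(x) = x, W_i(x) = (f(i) · W_{i-1}(x))^{g(i)}. If log(f(i)) / Π_{j=1}^{i-1} g(j) = O(i^{-2}) as i → ∞, then there exists a constant β > 0 such that for all i ∈ ℕ and all x ∈ [0,1), W_i(x) ≤ (β x)^{Π_{j=1}^{i} g(j)}. -/
open Finset Filter Asymptotics

/-- The recursion `W_0(x) = x`, `W_i(x) = (f(i) · W_{i-1}(x))^{g(i)}` (real exponents). -/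
noncomputable def Wrec (f g : ℕ → ℝ) (x : ℝ) : ℕ → ℝ
  | 0 => x
  | i + 1 => (f (i + 1) * Wrec f g x i) ^ g (i + 1)

/-- If `log(f(i)) / ∏_{j=1}^{i-1} g(j) = O(i^{-2})` as `i → ∞`, then there is a constant
`β > 0` such that for all `i` and all `x ∈ [0,1)`,
`W_i(x) ≤ (β x)^{∏_{j=1}^{i} g(j)}`. -/
theorem stmt10 (f g : ℕ → ℝ)
    (hf : ∀ i, 1 ≤ i → 0 < f i) (hg : ∀ i, 1 ≤ i → 1 ≤ g i)
    (hO : Asymptotics.IsBigO Filter.atTop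
      (fun i : ℕ => Real.log (f i) / ∏ j ∈ Finset.Icc 1 (i - 1), g j)
      (fun i : ℕ => ((i : ℝ) ^ 2)⁻¹)) :
    ∃ β > (0 : ℝ), ∀ i : ℕ, ∀ x ∈ Set.Ico (0 : ℝ) 1,
      Wrec f g x i ≤ (β * x) ^ ∏ j ∈ Finset.Icc 1 i, g j := by
  set a : ℕ → ℝ := fun i => ‖Real.log (f i) / ∏ j ∈ Finset.Icc 1 (i - 1), g j‖ with haa
  have hP : ∀ i : ℕ, (1:ℝ) ≤ ∏ j ∈ Finset.Icc 1 i, g j := by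
    intro i
    calc (1:ℝ) = ∏ _j ∈ Finset.Icc 1 i, (1:ℝ) := by simp
      _ ≤ ∏ j ∈ Finset.Icc 1 i, g j :=
        Finset.prod_le_prod (fun j _ => zero_le_one)
          (fun j hj => hg j (Finset.mem_Icc.mp hj).1)
  have hPpos : ∀ i, (0:ℝ) < ∏ j ∈ Finset.Icc 1 i, g j :=
    fun i => lt_of_lt_of_le one_pos (hP i)
  have ha : Summable a := by
    have hsum : Summable (fun i : ℕ => ((i:ℝ)^2)⁻¹) := by
      simpa using Real.summable_one_div_nat_pow.mpr (by norm_num : 1 < 2)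
    exact summable_of_isBigO_nat hsum hO.norm_left
  set T : ℝ := ∑' i, a i with hT
  have hS : ∀ i, ∑ j ∈ Finset.Icc 1 i, a j ≤ T := fun i =>
    Summable.sum_le_tsum _ (fun j _ => norm_nonneg _) ha
  refine ⟨Real.exp T, Real.exp_pos T, ?_⟩
  intro i x hx
  obtain ⟨hx0, hx1⟩ := hx
  have Wnn : ∀ i, 0 ≤ Wrec f g x i := by
    intro i
    induction i with
    | zero => exact hx0
    | succ n ih =>
      show 0 ≤ (f (n + 1) * Wrec f g x n) ^ g (n + 1)
      exact Real.rpow_nonneg (mul_nonneg (hf (n+1) (by omega)).le ih) _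
  have key : ∀ i, Wrec f g x i ≤
      (Real.exp (∑ j ∈ Finset.Icc 1 i, a j) * x) ^ (∏ j ∈ Finset.Icc 1 i, g j) := by
    intro i
    induction i with
    | zero => simp [Wrec]
    | succ n ih =>
      have h1n : 1 ≤ n + 1 := by omega
      rw [Finset.prod_Icc_succ_top h1n, Finset.sum_Icc_succ_top h1n]
      show (f (n + 1) * Wrec f g x n) ^ g (n + 1) ≤ _
      have hbx : 0 ≤ Real.exp (∑ j ∈ Finset.Icc 1 n, a j + a (n+1)) * x :=
        mul_nonneg (Real.exp_nonneg _) hx0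
      rw [Real.rpow_mul hbx]
      have hg0 : (0:ℝ) ≤ g (n+1) := le_trans zero_le_one (hg (n+1) h1n)
      refine Real.rpow_le_rpow (mul_nonneg (hf (n+1) h1n).le (Wnn n)) ?_ hg0
      -- main inequality: f(n+1) * W_n ≤ (exp(S_n + a(n+1)) * x)^{P_n}
      have han : a (n+1) * (∏ j ∈ Finset.Icc 1 n, g j) = |Real.log (f (n+1))| := by
        have : (n+1) - 1 = n := rfl
        simp only [haa, this, Real.norm_eq_abs, abs_div,
          abs_of_pos (hPpos n)]
        field_simp
        exact mul_div_cancel_right₀ _ (hPpos n).ne'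
      have hexp : (Real.exp (a (n+1))) ^ (∏ j ∈ Finset.Icc 1 n, g j)
          = Real.exp (|Real.log (f (n+1))|) := by
        rw [Real.rpow_def_of_pos (Real.exp_pos _), Real.log_exp, han]
      have hfle : f (n+1) ≤ (Real.exp (a (n+1))) ^ (∏ j ∈ Finset.Icc 1 n, g j) := by
        rw [hexp]
        calc f (n+1) = Real.exp (Real.log (f (n+1))) :=
              (Real.exp_log (hf (n+1) h1n)).symm
          _ ≤ Real.exp (|Real.log (f (n+1))|) :=
              Real.exp_le_exp.mpr (le_abs_self _)
      calc f (n+1) * Wrec f g x n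
          ≤ f (n+1) * (Real.exp (∑ j ∈ Finset.Icc 1 n, a j) * x)
              ^ (∏ j ∈ Finset.Icc 1 n, g j) :=
            mul_le_mul_of_nonneg_left ih (hf (n+1) h1n).le
        _ ≤ (Real.exp (a (n+1))) ^ (∏ j ∈ Finset.Icc 1 n, g j) *
              (Real.exp (∑ j ∈ Finset.Icc 1 n, a j) * x)
              ^ (∏ j ∈ Finset.Icc 1 n, g j) :=
            mul_le_mul_of_nonneg_right hfle (Real.rpow_nonneg
              (mul_nonneg (Real.exp_nonneg _) hx0) _)
        _ = (Real.exp (∑ j ∈ Finset.Icc 1 n, a j + a (n+1)) * x)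
              ^ (∏ j ∈ Finset.Icc 1 n, g j) := by
            rw [← Real.mul_rpow (Real.exp_nonneg _)
              (mul_nonneg (Real.exp_nonneg _) hx0), Real.exp_add]
            ring_nf
  calc Wrec f g x i
      ≤ (Real.exp (∑ j ∈ Finset.Icc 1 i, a j) * x) ^ (∏ j ∈ Finset.Icc 1 i, g j) := key i
    _ ≤ (Real.exp T * x) ^ (∏ j ∈ Finset.Icc 1 i, g j) :=
        Real.rpow_le_rpow (mul_nonneg (Real.exp_nonneg _) hx0)
          (mul_le_mul_of_nonneg_right (Real.exp_le_exp.mpr (hS i)) hx0) (hPpos i).le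
end

section
/- The infinite product Π_{ℓ=1}^∞ (k_ℓ / n_ℓ), where n_ℓ = 2^{r_ℓ} - 1, k_ℓ = 2^{r_ℓ} - 2r_ℓ - 1, and r_ℓ = ⌊2 log₂(4ℓ)⌋, is bounded below by a positive constant (in particular, at least 1/300). -/
/-!
Write `x_ℓ = k_ℓ / n_ℓ ∈ [0, 1]`. Since `2 ^ r_ℓ` is the largest power of two not exceeding `16 ℓ²`,
we have `n_ℓ ≥ 8 ℓ²` and `(r_ℓ + 2)⁴ ≤ 81 · 2 ^ r_ℓ ≤ (36 ℓ)²`, so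
`1 - x_ℓ ≤ 2 r_ℓ / n_ℓ ≤ 3 / (2 ℓ^{3/2}) ≤ 3 (1/√(ℓ-1) - 1/√ℓ)`. By the Weierstrass product
inequality and telescoping, the factors with `ℓ > 16` multiply to at least `1 - 3/√16 = 1/4`, and
the first sixteen factors, computed exactly, multiply to more than `1/75`.
-/

/-- The concatenation-level parameter `r_ℓ = ⌊2 log₂(4ℓ)⌋`. -/
noncomputable def rHam (ℓ : ℕ) : ℕ := ⌊2 * Real.logb 2 (4 * (ℓ : ℝ))⌋₊

/-- Block length `n_ℓ = 2^{r_ℓ} - 1` of the `ℓ`-th quantum Hamming code. -/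
noncomputable def nHam (ℓ : ℕ) : ℕ := 2 ^ rHam ℓ - 1

/-- Dimension `k_ℓ = 2^{r_ℓ} - 2 r_ℓ - 1` of the `ℓ`-th quantum Hamming code. -/
noncomputable def kHam (ℓ : ℕ) : ℕ := 2 ^ rHam ℓ - 2 * rHam ℓ - 1

open Finset

theorem Finset.one_sub_sum_one_sub_le_prod {ι R : Type*} [CommRing R] [LinearOrder R]
    [IsStrictOrderedRing R] (s : Finset ι) (x : ι → R) (h0 : ∀ i ∈ s, 0 ≤ x i)
    (h1 : ∀ i ∈ s, x i ≤ 1) : 1 - ∑ i ∈ s, (1 - x i) ≤ ∏ i ∈ s, x i := by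
  induction s using Finset.cons_induction with
  | empty => simp
  | cons j s hj ih =>
    simp only [mem_cons, forall_eq_or_imp] at h0 h1
    rw [prod_cons, sum_cons]
    have hsum : 0 ≤ ∑ i ∈ s, (1 - x i) := sum_nonneg fun i hi => sub_nonneg.2 (h1.2 i hi)
    have hprod : x j * (1 - ∑ i ∈ s, (1 - x i)) ≤ x j * ∏ i ∈ s, x i :=
      mul_le_mul_of_nonneg_left (ih h0.2 h1.2) h0.1
    nlinarith [mul_nonneg hsum (sub_nonneg.2 h1.1)]

theorem Nat.add_two_pow_four_le (r : ℕ) : (r + 2) ^ 4 ≤ 81 * 2 ^ r := by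
  rcases Nat.lt_or_ge r 4 with hr | hr
  · interval_cases r <;> norm_num
  induction r, hr using Nat.le_induction with
  | base => norm_num
  | succ r hr ih =>
    calc (r + 1 + 2) ^ 4 ≤ 2 * (r + 2) ^ 4 := by
          obtain ⟨m, rfl⟩ := Nat.exists_eq_add_of_le hr
          ring_nf; nlinarith [sq_nonneg m]
      _ ≤ 2 * (81 * 2 ^ r) := Nat.mul_le_mul_left 2 ih
      _ = 81 * 2 ^ (r + 1) := by ring

lemma rHam_eq_log (ℓ : ℕ) : rHam ℓ = Nat.log 2 (16 * ℓ ^ 2) := by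
  have hlog : 2 * Real.logb 2 (4 * (ℓ : ℝ)) = Real.logb 2 ((16 * ℓ ^ 2 : ℕ) : ℝ) := by
    rw [show ((16 * ℓ ^ 2 : ℕ) : ℝ) = (4 * (ℓ : ℝ)) ^ 2 by push_cast; ring, Real.logb_pow]
    ring
  have hfloor := Real.floor_logb_natCast (b := 2) (r := ((16 * ℓ ^ 2 : ℕ) : ℝ)) (Nat.cast_nonneg _)
  rw [Int.log_natCast] at hfloor
  rw [rHam, hlog, ← Int.floor_toNat, show (2 : ℝ) = ((2 : ℕ) : ℝ) by norm_num, hfloor,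
    Int.toNat_natCast]

lemma two_pow_rHam_le {ℓ : ℕ} (hℓ : 1 ≤ ℓ) : 2 ^ rHam ℓ ≤ 16 * ℓ ^ 2 := by
  rw [rHam_eq_log]
  exact Nat.pow_log_le_self 2 (by positivity)

lemma eight_mul_sq_le_nHam (ℓ : ℕ) : 8 * ℓ ^ 2 ≤ nHam ℓ := by
  have h := Nat.lt_pow_succ_log_self (b := 2) (by norm_num) (16 * ℓ ^ 2)
  rw [← rHam_eq_log, pow_succ 2 (rHam ℓ)] at h
  unfold nHam; omega

lemma rHam_add_two_le {ℓ : ℕ} (hℓ : 1 ≤ ℓ) : (rHam ℓ : ℝ) + 2 ≤ 6 * √ℓ := by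
  have hsq : (rHam ℓ + 2) ^ 2 ≤ 36 * ℓ := by
    rw [← Nat.pow_le_pow_iff_left two_ne_zero]
    calc ((rHam ℓ + 2) ^ 2) ^ 2 = (rHam ℓ + 2) ^ 4 := by ring
      _ ≤ 81 * 2 ^ rHam ℓ := Nat.add_two_pow_four_le _
      _ ≤ 81 * (16 * ℓ ^ 2) := Nat.mul_le_mul_left _ (two_pow_rHam_le hℓ)
      _ = (36 * ℓ) ^ 2 := by ring
  rw [show (6 : ℝ) * √ℓ = √(36 * ℓ) by
    rw [Real.sqrt_mul (by norm_num), show (36 : ℝ) = 6 ^ 2 by norm_num, Real.sqrt_sq (by norm_num)]]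
  rw [Real.le_sqrt (by positivity) (by positivity)]
  exact_mod_cast hsq

noncomputable def hammingRate (ℓ : ℕ) : ℝ := kHam ℓ / nHam ℓ

lemma hammingRate_nonneg (ℓ : ℕ) : 0 ≤ hammingRate ℓ := by
  unfold hammingRate; positivity

lemma hammingRate_le_one (ℓ : ℕ) : hammingRate ℓ ≤ 1 := by
  refine div_le_one_of_le₀ ?_ (Nat.cast_nonneg _)
  exact_mod_cast (show kHam ℓ ≤ nHam ℓ by unfold kHam nHam; omega)

lemma one_sub_hammingRate_le {ℓ : ℕ} (hℓ : 1 ≤ ℓ) :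
    1 - hammingRate ℓ ≤ 2 * rHam ℓ / nHam ℓ := by
  have hn : (0 : ℝ) < nHam ℓ := by
    exact_mod_cast (show 0 < 8 * ℓ ^ 2 by positivity).trans_le (eight_mul_sq_le_nHam ℓ)
  have hkn : (nHam ℓ : ℝ) ≤ kHam ℓ + 2 * rHam ℓ := by
    exact_mod_cast (show nHam ℓ ≤ kHam ℓ + 2 * rHam ℓ by unfold kHam nHam; omega)
  rw [hammingRate, one_sub_div hn.ne', div_le_div_iff_of_pos_right hn]
  linarith

lemma one_sub_hammingRate_succ_le {i : ℕ} (hi : 1 ≤ i) :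
    1 - hammingRate (i + 1) ≤ 3 * (1 / √i - 1 / √(i + 1 : ℕ)) := by
  set s := √i
  set t := √(i + 1 : ℕ)
  have hs : 0 < s := Real.sqrt_pos.2 (by exact_mod_cast hi)
  have hst : s ≤ t := Real.sqrt_le_sqrt (by norm_num)
  have hs2 : s ^ 2 = i := Real.sq_sqrt (Nat.cast_nonneg _)
  have ht2 : t ^ 2 = (i + 1 : ℕ) := Real.sq_sqrt (Nat.cast_nonneg _)
  have hr : (2 * rHam (i + 1) : ℝ) ≤ 12 * t := by
    linarith [rHam_add_two_le (ℓ := i + 1) (by omega)]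
  have hn : 8 * t ^ 4 ≤ (nHam (i + 1) : ℝ) := by
    rw [show t ^ 4 = (t ^ 2) ^ 2 by ring, ht2]
    exact_mod_cast eight_mul_sq_le_nHam (i + 1)
  have ht : 0 < t := hs.trans_le hst
  have hdiff : 1 / s - 1 / t = 1 / (s * t * (s + t)) := by
    rw [div_sub_div _ _ hs.ne' ht.ne', div_eq_div_iff (by positivity) (by positivity)]
    push_cast at ht2
    linear_combination (s * t) * (ht2 - hs2)
  calc 1 - hammingRate (i + 1) ≤ 2 * rHam (i + 1) / nHam (i + 1) :=
        one_sub_hammingRate_le (by omega)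
    _ ≤ 12 * t / (8 * t ^ 4) := div_le_div₀ (by positivity) hr (by positivity) hn
    _ = 3 / (2 * t ^ 3) := by field_simp; ring
    _ ≤ 3 / (s * t * (s + t)) := div_le_div_of_nonneg_left (by norm_num) (by positivity)
        (by nlinarith [mul_le_mul hst hst hs.le ht.le])
    _ = 3 * (1 / s - 1 / t) := by rw [hdiff]; ring

lemma sum_one_sub_hammingRate_Ico_le (N : ℕ) :
    ∑ i ∈ Ico 16 N, (1 - hammingRate (i + 1)) ≤ 3 / 4 := by
  rcases Nat.lt_or_ge N 16 with hN | hN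
  · simp only [Ico_eq_empty_of_le hN.le, sum_empty]; norm_num
  have hsqrt16 : √((16 : ℕ) : ℝ) = 4 := by
    rw [show ((16 : ℕ) : ℝ) = 4 ^ 2 by norm_num, Real.sqrt_sq (by norm_num)]
  calc ∑ i ∈ Ico 16 N, (1 - hammingRate (i + 1))
      ≤ ∑ i ∈ Ico 16 N, -3 * (1 / √(i + 1 : ℕ) - 1 / √i) := by
        refine sum_le_sum fun i hi => ?_
        have := one_sub_hammingRate_succ_le (i := i) (by linarith [(mem_Ico.1 hi).1])
        linarith
    _ = 3 / 4 - 3 / √N := by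
        rw [← mul_sum, sum_Ico_sub (fun i => 1 / √(i : ℝ)) hN, hsqrt16]; ring
    _ ≤ 3 / 4 := by linarith [show 0 ≤ 3 / √(N : ℝ) by positivity]

lemma prod_hammingRate_Ico_ge (N : ℕ) : 1 / 4 ≤ ∏ i ∈ Ico 16 N, hammingRate (i + 1) :=
  calc (1 / 4 : ℝ) ≤ 1 - ∑ i ∈ Ico 16 N, (1 - hammingRate (i + 1)) := by
        linarith [sum_one_sub_hammingRate_Ico_le N]
    _ ≤ ∏ i ∈ Ico 16 N, hammingRate (i + 1) :=
        one_sub_sum_one_sub_le_prod _ _ (fun _ _ => hammingRate_nonneg _)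
          (fun _ _ => hammingRate_le_one _)

lemma prod_hammingRate_range_sixteen_ge : 1 / 75 ≤ ∏ i ∈ range 16, hammingRate (i + 1) := by
  simp only [prod_range_succ, prod_range_zero, hammingRate, kHam, nHam, rHam_eq_log]
  norm_num

lemma prod_hammingRate_ge (s : Finset ℕ) : 1 / 300 ≤ ∏ i ∈ s, hammingRate (i + 1) := by
  obtain ⟨N, hsN⟩ := s.exists_nat_subset_range
  set M := max N 16
  calc (1 / 300 : ℝ) = 1 / 75 * (1 / 4) := by norm_num
    _ ≤ (∏ i ∈ range 16, hammingRate (i + 1)) * ∏ i ∈ Ico 16 M, hammingRate (i + 1) :=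
        mul_le_mul prod_hammingRate_range_sixteen_ge (prod_hammingRate_Ico_ge M) (by norm_num)
          (prod_nonneg fun _ _ => hammingRate_nonneg _)
    _ = ∏ i ∈ range M, hammingRate (i + 1) := prod_range_mul_prod_Ico _ (le_max_right N 16)
    _ ≤ ∏ i ∈ s, hammingRate (i + 1) :=
        prod_le_prod_of_subset_of_le_one (hsN.trans (range_subset_range.2 (le_max_left N 16)))
          (fun _ _ => hammingRate_nonneg _) (fun _ _ _ => hammingRate_le_one _)

/-- The infinite product `∏_{ℓ=1}^∞ (k_ℓ / n_ℓ)` of the rates of the quantum Hamming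
codes with `r_ℓ = ⌊2 log₂(4ℓ)⌋` is bounded below by the positive constant `1/300`:
every partial product is at least `1/300`, and so is the infinite product. -/
theorem stmt11 :
    (∀ L : ℕ, (1 / 300 : ℝ) ≤ ∏ ℓ ∈ Finset.Icc 1 L, (kHam ℓ : ℝ) / (nHam ℓ)) ∧
    (1 / 300 : ℝ) ≤ ∏' ℓ : ℕ, ((kHam (ℓ + 1) : ℝ) / (nHam (ℓ + 1))) := by
  refine ⟨fun L => ?_, ?_⟩
  · have hshift : ∏ ℓ ∈ Icc 1 L, hammingRate ℓ = ∏ i ∈ range L, hammingRate (i + 1) := by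
      rw [range_eq_Ico, prod_Ico_add', zero_add, Ico_add_one_right_eq_Icc]
    exact hshift ▸ prod_hammingRate_ge _
  · change 1 / 300 ≤ ∏' i : ℕ, hammingRate (i + 1)
    by_cases hmul : Multipliable fun i => hammingRate (i + 1)
    · exact ge_of_tendsto' hmul.hasProd prod_hammingRate_ge
    · rw [tprod_eq_one_of_not_multipliable hmul]; norm_num
end

section
/- The composition of two Pauli fault-tolerant gadgets is a Pauli fault-tolerant gadget: if G1 is an (O1, 𝒢1)-Pauli FT gadget from (C1, F1)-blocks to (C2, F2)-blocks and G2 is an (O2, 𝒢2)-Pauli FT gadget from (C2, F2)-blocks to (C3, F3)-blocks, then G2 ∘ G1 is an (O2 ∘ O1, 𝒢1 ⊞ 𝒢2)-Pauli FT gadget from (C1, F1)-blocks to (C3, F3)-blocks. -/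
/-- A fault path `P` (a set of locations) avoids a family `𝒢` of bad fault paths when it
contains no element of `𝒢`. -/
def Avoids {Loc : Type*} (P : Set Loc) (𝒢 : Set (Set Loc)) : Prop :=
  ∀ g ∈ 𝒢, ¬ g ⊆ P

/-- `gadget` is an `(op, 𝒢)`-Pauli fault-tolerant gadget taking `(C, F)`-blocks (with
encoding map `enc` and deviation relation `dev`) to `(C', F')`-blocks (with encoding
`enc'` and deviation `dev'`): for every Pauli fault `f` whose fault path avoids `𝒢` and
every input state `σ` that is `F`-Pauli-deviated from the encoding of a logical state
`ρ`, the output `gadget f σ` is `F'`-Pauli-deviated from the encoding of `op ρ`. -/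
def IsPauliFT {Fault S S' L L' Loc : Type*}
    (gadget : Fault → S → S') (isPauli : Fault → Prop) (path : Fault → Set Loc)
    (𝒢 : Set (Set Loc)) (enc : L → S) (enc' : L' → S')
    (dev : S → S → Prop) (dev' : S' → S' → Prop) (op : L → L') : Prop :=
  ∀ f, isPauli f → Avoids (path f) 𝒢 →
    ∀ ρ σ, dev σ (enc ρ) → dev' (gadget f σ) (enc' (op ρ))

/-- Composition of Pauli fault-tolerant gadgets: if `G1` is an `(O1, 𝒢1)`-Pauli FT
gadget from `(C1, F1)`-blocks to `(C2, F2)`-blocks and `G2` is an `(O2, 𝒢2)`-Pauli FT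
gadget from `(C2, F2)`-blocks to `(C3, F3)`-blocks, then `G2 ∘ G1` is an
`(O2 ∘ O1, 𝒢1 ⊞ 𝒢2)`-Pauli FT gadget from `(C1, F1)`-blocks to `(C3, F3)`-blocks.
Here a fault for the composed gadget is a pair of faults, its fault path is the disjoint
union of the two fault paths in `Loc1 ⊕ Loc2`, and `𝒢1 ⊞ 𝒢2` is the union of the images
of `𝒢1` and `𝒢2` under the canonical inclusions. -/
theorem stmt17 {Fault1 Fault2 S1 S2 S3 L1 L2 L3 Loc1 Loc2 : Type*}
    (G1 : Fault1 → S1 → S2) (G2 : Fault2 → S2 → S3)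
    (p1 : Fault1 → Prop) (p2 : Fault2 → Prop)
    (path1 : Fault1 → Set Loc1) (path2 : Fault2 → Set Loc2)
    (𝒢1 : Set (Set Loc1)) (𝒢2 : Set (Set Loc2))
    (enc1 : L1 → S1) (enc2 : L2 → S2) (enc3 : L3 → S3)
    (dev1 : S1 → S1 → Prop) (dev2 : S2 → S2 → Prop) (dev3 : S3 → S3 → Prop)
    (O1 : L1 → L2) (O2 : L2 → L3)
    (h1 : IsPauliFT G1 p1 path1 𝒢1 enc1 enc2 dev1 dev2 O1)
    (h2 : IsPauliFT G2 p2 path2 𝒢2 enc2 enc3 dev2 dev3 O2) :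
    IsPauliFT (fun f : Fault1 × Fault2 => G2 f.2 ∘ G1 f.1)
      (fun f => p1 f.1 ∧ p2 f.2)
      (fun f => (Sum.inl '' path1 f.1) ∪ (Sum.inr '' path2 f.2))
      ((Set.image Sum.inl '' 𝒢1) ∪ (Set.image Sum.inr '' 𝒢2))
      enc1 enc3 dev1 dev3 (O2 ∘ O1) := by
  rintro ⟨f1, f2⟩ ⟨hp1, hp2⟩ hav ρ σ hdev
  have hav1 : Avoids (path1 f1) 𝒢1 := by
    intro g hg hsub
    exact hav (Sum.inl '' g) (Or.inl ⟨g, hg, rfl⟩)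
      (fun x hx => by
        obtain ⟨y, hy, rfl⟩ := hx
        exact Or.inl ⟨y, hsub hy, rfl⟩)
  have hav2 : Avoids (path2 f2) 𝒢2 := by
    intro g hg hsub
    refine hav (Sum.inr '' g) (Or.inr ⟨g, hg, rfl⟩) ?_
    rintro x ⟨y, hy, rfl⟩
    exact Or.inr ⟨y, hsub hy, rfl⟩
  exact h2 f2 hp2 hav2 (O1 ρ) _ (h1 f1 hp1 hav1 ρ σ hdev)
end
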